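/- arXiv:2310.09023 — 5 statements merged into one kernel-verified Lean document; each statement's English description precedes it below -/
import Mathlib

section
/- Let n ≥ 1, let p be a prime, and let T : Fin n → ℕ be a string with T k < p for all k. Fix ℓ and positions i, j with i + ℓ < n and j + ℓ < n. If the two fragments differ, i.e. T(i+k) ≠ T(j+k) for some 0 ≤ k ≤ ℓ, then the number of r ∈ ZMod p for which φ_r(i,ℓ) = φ_r(j,ℓ) is at most ℓ; in particular, for r chosen uniformly at random from ZMod p, the two fingerprints collide with probability at most ℓ/p. -/
/-- The Karp–Rabin fingerprint of the fragment of `T` of length `ℓ+1` starting at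
position `i` (0-based), for seed `r`:
`φ_r(i,ℓ) = Σ_{k=0}^{ℓ} (T(i+k) : ZMod p) · r^{ℓ−k}`. -/
def krFingerprint {n p : ℕ} (T : Fin n → ℕ) (r : ZMod p) (i ℓ : ℕ) (h : i + ℓ < n) :
    ZMod p :=
  ∑ k : Fin (ℓ + 1), ((T ⟨i + k.1, by have := k.isLt; omega⟩ : ℕ) : ZMod p) * r ^ (ℓ - k.1)

theorem stmt_1 {n p : ℕ} (hn : 1 ≤ n) (hp : p.Prime) (T : Fin n → ℕ)
    (hT : ∀ k, T k < p) (ℓ i j : ℕ) (hi : i + ℓ < n) (hj : j + ℓ < n)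
    (hne : ∃ k, ∃ hk : k ≤ ℓ, T ⟨i + k, by omega⟩ ≠ T ⟨j + k, by omega⟩) :
    {r : ZMod p | krFingerprint T r i ℓ hi = krFingerprint T r j ℓ hj}.ncard ≤ ℓ ∧
    ({r : ZMod p | krFingerprint T r i ℓ hi = krFingerprint T r j ℓ hj}.ncard : ℝ) / p
      ≤ (ℓ : ℝ) / p := by
  haveI := Fact.mk hp
  obtain ⟨k₀, hk₀, hdiff⟩ := hne
  set a : Fin (ℓ + 1) → ZMod p := fun k => ((T ⟨i + k.1, by have := k.isLt; omega⟩ : ℕ) : ZMod p)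
  set b : Fin (ℓ + 1) → ZMod p := fun k => ((T ⟨j + k.1, by have := k.isLt; omega⟩ : ℕ) : ZMod p)
  set P : Polynomial (ZMod p) :=
    ∑ k : Fin (ℓ + 1), Polynomial.C (a k - b k) * Polynomial.X ^ (ℓ - k.1) with hP
  have hcoeff : P.coeff (ℓ - k₀) = a ⟨k₀, by omega⟩ - b ⟨k₀, by omega⟩ := by
    rw [hP, Polynomial.finset_sum_coeff]
    rw [Finset.sum_eq_single (⟨k₀, by omega⟩ : Fin (ℓ + 1))]
    · simpa using Polynomial.coeff_mul_X_pow (Polynomial.C (a ⟨k₀, by omega⟩) - Polynomial.C (b ⟨k₀, by omega⟩)) (ℓ - k₀) 0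
    · intro k _ hk
      rw [Polynomial.coeff_C_mul, Polynomial.coeff_X_pow, if_neg, mul_zero]
      intro h
      apply hk
      have : k.1 ≤ ℓ := by omega
      have : k.1 = k₀ := by omega
      exact Fin.ext this
    · simp
  have hab : a ⟨k₀, by omega⟩ ≠ b ⟨k₀, by omega⟩ := by
    intro h
    apply hdiff
    have h1 := hT ⟨i + k₀, by omega⟩
    have h2 := hT ⟨j + k₀, by omega⟩
    have := congrArg ZMod.val h
    rwa [ZMod.val_natCast_of_lt h1, ZMod.val_natCast_of_lt h2] at this
  have hPne : P ≠ 0 := by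
    intro h
    rw [h, Polynomial.coeff_zero] at hcoeff
    exact hab (sub_eq_zero.mp hcoeff.symm)
  have hdeg : P.natDegree ≤ ℓ := by
    refine Polynomial.natDegree_sum_le_of_forall_le _ _ fun k _ => ?_
    refine le_trans (Polynomial.natDegree_C_mul_le _ _) ?_
    simp [Nat.sub_le ℓ k.1]
  have hsub : {r : ZMod p | krFingerprint T r i ℓ hi = krFingerprint T r j ℓ hj}
      ⊆ (P.roots.toFinset : Set (ZMod p)) := by
    intro r hr
    simp only [Set.mem_setOf_eq] at hr
    simp only [Finset.coe_sort_coe, Multiset.mem_toFinset, Finset.mem_coe,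
      Polynomial.mem_roots, hPne, ne_eq, not_false_eq_true, true_and]
    rw [Polynomial.IsRoot, hP]
    simp only [Polynomial.eval_finset_sum, Polynomial.eval_mul, Polynomial.eval_C,
      Polynomial.eval_pow, Polynomial.eval_X]
    have : ∑ k : Fin (ℓ + 1), (a k - b k) * r ^ (ℓ - k.1)
        = krFingerprint T r i ℓ hi - krFingerprint T r j ℓ hj := by
      rw [krFingerprint, krFingerprint, ← Finset.sum_sub_distrib]
      exact Finset.sum_congr rfl fun k _ => by ring
    rw [this, hr, sub_self]
  have hcard : {r : ZMod p | krFingerprint T r i ℓ hi = krFingerprint T r j ℓ hj}.ncard ≤ ℓ := by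
    calc {r : ZMod p | krFingerprint T r i ℓ hi = krFingerprint T r j ℓ hj}.ncard
        ≤ (P.roots.toFinset : Set (ZMod p)).ncard :=
          Set.ncard_le_ncard hsub (Set.toFinite _)
      _ = P.roots.toFinset.card := by rw [Set.ncard_coe_finset]
      _ ≤ Multiset.card P.roots := P.roots.toFinset_card_le
      _ ≤ P.natDegree := Polynomial.card_roots' P
      _ ≤ ℓ := hdeg
  refine ⟨hcard, ?_⟩
  have hp0 : (0 : ℝ) ≤ p := Nat.cast_nonneg p
  apply div_le_div_of_nonneg_right ?_ ?_ |>.trans_eq rfl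
  all_goals first
  | exact_mod_cast hcard
  | positivity
end

section
/- Let n ≥ 1, let c ≥ 1 be a natural number, let p be a prime with p ≥ n^{c+4}, and let T : Fin n → ℕ be a string with T k < p for all k. Then the number of r ∈ ZMod p for which there exist i, j, ℓ with i + ℓ < n and j + ℓ < n such that T(i+k) ≠ T(j+k) for some 0 ≤ k ≤ ℓ but φ_r(i,ℓ) = φ_r(j,ℓ) is at most n^4. Consequently, for r chosen uniformly at random from ZMod p, with probability at least 1 − n^{−c} the fingerprint function is perfect: for all equal-length fragments, the fingerprints are equal if and only if the fragments are equal. -/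
theorem stmt_2 {n p c : ℕ} (hn : 1 ≤ n) (hc : 1 ≤ c) (hp : p.Prime)
    (hpn : n ^ (c + 4) ≤ p) (T : Fin n → ℕ) (hT : ∀ k, T k < p) :
    {r : ZMod p | ∃ i j ℓ, ∃ hi : i + ℓ < n, ∃ hj : j + ℓ < n,
        (∃ k, ∃ hk : k ≤ ℓ, T ⟨i + k, by omega⟩ ≠ T ⟨j + k, by omega⟩) ∧
        krFingerprint T r i ℓ hi = krFingerprint T r j ℓ hj}.ncard ≤ n ^ 4 ∧
    (1 : ℝ) - ((n : ℝ) ^ c)⁻¹ ≤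
      (({r : ZMod p | ∀ i j ℓ (hi : i + ℓ < n) (hj : j + ℓ < n),
          krFingerprint T r i ℓ hi = krFingerprint T r j ℓ hj ↔
            ∀ k (hk : k ≤ ℓ), T ⟨i + k, by omega⟩ = T ⟨j + k, by omega⟩}.ncard : ℝ) / p) := by
  classical
  haveI : Fact p.Prime := ⟨hp⟩
  -- extend T to ℕ
  set T' : ℕ → ℕ := fun m => if h : m < n then T ⟨m, h⟩ else 0 with hT'def
  have hT'eq : ∀ m (h : m < n), T' m = T ⟨m, h⟩ := by
    intro m h; simp [hT'def, h]
  have hT'lt : ∀ m, T' m < p := by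
    intro m
    by_cases h : m < n
    · rw [hT'eq m h]; exact hT _
    · simp [hT'def, h, hp.pos]
  -- the difference polynomial
  set Q : ℕ → ℕ → ℕ → Polynomial (ZMod p) := fun i j ℓ =>
    ∑ k ∈ Finset.range (ℓ + 1),
      Polynomial.C ((T' (i + k) : ZMod p) - (T' (j + k) : ZMod p)) * Polynomial.X ^ (ℓ - k)
    with hQdef
  -- fingerprint in terms of T'
  have hkr : ∀ (r : ZMod p) i ℓ (hi : i + ℓ < n),
      krFingerprint T r i ℓ hi
        = ∑ k ∈ Finset.range (ℓ + 1), ((T' (i + k) : ℕ) : ZMod p) * r ^ (ℓ - k) := by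
    intro r i ℓ hi
    rw [krFingerprint, Finset.sum_range]
    refine Fintype.sum_congr _ _ fun k => ?_
    have hk : i + k.1 < n := by have := k.isLt; omega
    rw [hT'eq _ hk]
  -- evaluation of Q
  have heval : ∀ (r : ZMod p) i j ℓ,
      (Q i j ℓ).eval r
        = (∑ k ∈ Finset.range (ℓ + 1), ((T' (i + k) : ℕ) : ZMod p) * r ^ (ℓ - k))
          - (∑ k ∈ Finset.range (ℓ + 1), ((T' (j + k) : ℕ) : ZMod p) * r ^ (ℓ - k)) := by
    intro r i j ℓ
    rw [hQdef]
    simp only [Polynomial.eval_finset_sum, Polynomial.eval_mul, Polynomial.eval_C,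
      Polynomial.eval_pow, Polynomial.eval_X, sub_mul, Finset.sum_sub_distrib]
  -- coefficient of Q
  have hcoeff : ∀ i j ℓ k₀, k₀ ≤ ℓ →
      (Q i j ℓ).coeff (ℓ - k₀) = ((T' (i + k₀) : ZMod p) - (T' (j + k₀) : ZMod p)) := by
    intro i j ℓ k₀ hk₀
    rw [hQdef]
    simp only [Polynomial.finset_sum_coeff, Polynomial.coeff_C_mul, Polynomial.coeff_X_pow]
    rw [Finset.sum_eq_single k₀]
    · simp
    · intro b hb hne
      have hb' := Finset.mem_range.1 hb
      rw [if_neg (by omega), mul_zero]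
    · intro h
      exact absurd (Finset.mem_range.2 (by omega)) h
  -- degree of Q
  have hdeg : ∀ i j ℓ, (Q i j ℓ).natDegree ≤ ℓ := by
    intro i j ℓ
    rw [hQdef]
    exact Polynomial.natDegree_sum_le_of_forall_le _ _ fun k _ =>
      (Polynomial.natDegree_C_mul_X_pow_le _ _).trans (by omega)
  -- root-set finset
  set B : Finset (ZMod p) :=
    (Finset.range n ×ˢ Finset.range n ×ˢ Finset.range n).biUnion
      (fun t => (Q t.1 t.2.1 t.2.2).roots.toFinset) with hBdef
  have hBcard : B.card ≤ n ^ 4 := by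
    refine (Finset.card_biUnion_le).trans ?_
    have hbound : ∀ t ∈ (Finset.range n ×ˢ Finset.range n ×ˢ Finset.range n),
        ((Q t.1 t.2.1 t.2.2).roots.toFinset).card ≤ n := by
      intro t ht
      refine (Multiset.toFinset_card_le _).trans ((Polynomial.card_roots' _).trans ?_)
      have := hdeg t.1 t.2.1 t.2.2
      simp only [Finset.mem_product, Finset.mem_range] at ht
      omega
    calc ∑ t ∈ (Finset.range n ×ˢ Finset.range n ×ˢ Finset.range n),
          ((Q t.1 t.2.1 t.2.2).roots.toFinset).card
        ≤ ∑ _t ∈ (Finset.range n ×ˢ Finset.range n ×ˢ Finset.range n), n :=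
          Finset.sum_le_sum hbound
      _ = n * n * n * n := by
          simp [Finset.sum_const, Finset.card_product, mul_comm, mul_assoc, mul_left_comm]
      _ = n ^ 4 := by ring
  -- the bad set is a subset of B
  have hsub : {r : ZMod p | ∃ i j ℓ, ∃ hi : i + ℓ < n, ∃ hj : j + ℓ < n,
      (∃ k, ∃ hk : k ≤ ℓ, T ⟨i + k, by omega⟩ ≠ T ⟨j + k, by omega⟩) ∧
      krFingerprint T r i ℓ hi = krFingerprint T r j ℓ hj} ⊆ ↑B := by
    rintro r ⟨i, j, ℓ, hi, hj, ⟨k, hk, hne⟩, heq⟩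
    have hne' : T' (i + k) ≠ T' (j + k) := by
      rw [hT'eq (i + k) (by omega), hT'eq (j + k) (by omega)]
      exact hne
    have hQne : Q i j ℓ ≠ 0 := by
      intro h0
      have := hcoeff i j ℓ k hk
      rw [h0] at this
      simp only [Polynomial.coeff_zero] at this
      have hsub0 : ((T' (i + k) : ZMod p)) = ((T' (j + k) : ZMod p)) :=
        sub_eq_zero.1 this.symm
      apply hne'
      have h1 := congrArg ZMod.val hsub0
      rwa [ZMod.val_cast_of_lt (hT'lt _), ZMod.val_cast_of_lt (hT'lt _)] at h1
    have hroot : (Q i j ℓ).IsRoot r := by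
      rw [Polynomial.IsRoot, heval]
      rw [hkr r i ℓ hi, hkr r j ℓ hj] at heq
      rw [heq, sub_self]
    rw [Finset.mem_coe, hBdef, Finset.mem_biUnion]
    refine ⟨(i, j, ℓ), ?_, ?_⟩
    · simp only [Finset.mem_product, Finset.mem_range]
      exact ⟨by omega, by omega, by omega⟩
    · exact Multiset.mem_toFinset.2 (Polynomial.mem_roots'.2 ⟨hQne, hroot⟩)
  have hBadCard : {r : ZMod p | ∃ i j ℓ, ∃ hi : i + ℓ < n, ∃ hj : j + ℓ < n,
      (∃ k, ∃ hk : k ≤ ℓ, T ⟨i + k, by omega⟩ ≠ T ⟨j + k, by omega⟩) ∧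
      krFingerprint T r i ℓ hi = krFingerprint T r j ℓ hj}.ncard ≤ n ^ 4 := by
    calc _ ≤ (↑B : Set (ZMod p)).ncard := Set.ncard_le_ncard hsub (B.finite_toSet)
      _ = B.card := Set.ncard_coe_finset B
      _ ≤ n ^ 4 := hBcard
  refine ⟨hBadCard, ?_⟩
  -- good set is the complement of bad set
  have hcompl : {r : ZMod p | ∀ i j ℓ (hi : i + ℓ < n) (hj : j + ℓ < n),
      krFingerprint T r i ℓ hi = krFingerprint T r j ℓ hj ↔
        ∀ k (hk : k ≤ ℓ), T ⟨i + k, by omega⟩ = T ⟨j + k, by omega⟩}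
      = {r : ZMod p | ∃ i j ℓ, ∃ hi : i + ℓ < n, ∃ hj : j + ℓ < n,
      (∃ k, ∃ hk : k ≤ ℓ, T ⟨i + k, by omega⟩ ≠ T ⟨j + k, by omega⟩) ∧
      krFingerprint T r i ℓ hi = krFingerprint T r j ℓ hj}ᶜ := by
    ext r
    simp only [Set.mem_setOf_eq, Set.mem_compl_iff, not_exists]
    constructor
    · intro hgood i j ℓ hi hj
      rintro ⟨⟨k, hk, hne⟩, heq⟩
      exact hne (((hgood i j ℓ hi hj).1 heq) k hk)
    · intro hbad i j ℓ hi hj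
      constructor
      · intro heq
        by_contra hne
        push_neg at hne
        exact hbad i j ℓ hi hj ⟨hne, heq⟩
      · intro hfrag
        rw [hkr r i ℓ hi, hkr r j ℓ hj]
        refine Finset.sum_congr rfl fun k hk => ?_
        have hk' : k ≤ ℓ := by have := Finset.mem_range.1 hk; omega
        rw [hT'eq (i + k) (by omega), hT'eq (j + k) (by omega), hfrag k hk']
  rw [hcompl]
  -- counting
  have hp0 : 0 < p := hp.pos
  haveI : NeZero p := ⟨hp0.ne'⟩
  set Bad := {r : ZMod p | ∃ i j ℓ, ∃ hi : i + ℓ < n, ∃ hj : j + ℓ < n,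
      (∃ k, ∃ hk : k ≤ ℓ, T ⟨i + k, by omega⟩ ≠ T ⟨j + k, by omega⟩) ∧
      krFingerprint T r i ℓ hi = krFingerprint T r j ℓ hj} with hBadDef
  have hcardsum : Bad.ncard + Badᶜ.ncard = p := by
    rw [Set.ncard_add_ncard_compl Bad (Set.toFinite _) (Set.toFinite _), Nat.card_eq_fintype_card,
      ZMod.card]
  have hn4p : n ^ 4 * n ^ c ≤ p := by
    calc n ^ 4 * n ^ c = n ^ (c + 4) := by ring
      _ ≤ p := hpn
  have hGood : (p : ℕ) - n ^ 4 ≤ Badᶜ.ncard := by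
    have : Bad.ncard ≤ n ^ 4 := hBadCard
    omega
  -- real arithmetic
  have hnc1 : (1 : ℝ) ≤ (n : ℝ) ^ c := by
    exact_mod_cast Nat.one_le_pow _ _ hn
  have hncpos : (0 : ℝ) < (n : ℝ) ^ c := lt_of_lt_of_le one_pos hnc1
  have hppos : (0 : ℝ) < (p : ℝ) := by exact_mod_cast hp0
  have hn4p' : (n : ℝ) ^ 4 * (n : ℝ) ^ c ≤ p := by exact_mod_cast hn4p
  have hn4lep : (n : ℝ) ^ 4 ≤ p := le_trans (le_mul_of_one_le_right (by positivity) hnc1) hn4p'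
  have hGood' : (p : ℝ) - (n : ℝ) ^ 4 ≤ (Badᶜ.ncard : ℝ) := by
    have h1 : ((p - n ^ 4 : ℕ) : ℝ) ≤ (Badᶜ.ncard : ℝ) := by exact_mod_cast hGood
    have h2 : ((p - n ^ 4 : ℕ) : ℝ) = (p : ℝ) - (n : ℝ) ^ 4 := by
      have : n ^ 4 ≤ p := by exact_mod_cast hn4lep
      push_cast [this]
      ring
    linarith
  rw [le_div_iff₀ hppos]
  have hinv : ((n : ℝ) ^ c)⁻¹ * ((n : ℝ) ^ c) = 1 := inv_mul_cancel₀ (ne_of_gt hncpos)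
  have hyp : (n : ℝ) ^ 4 ≤ ((n : ℝ) ^ c)⁻¹ * p := by
    calc (n : ℝ) ^ 4 = (n:ℝ)^4 * (n:ℝ)^c * ((n:ℝ)^c)⁻¹ := by
          field_simp
      _ ≤ p * ((n:ℝ)^c)⁻¹ := by
          apply mul_le_mul_of_nonneg_right hn4p' (by positivity)
      _ = ((n : ℝ) ^ c)⁻¹ * p := by ring
  have hfin : (1 - ((n : ℝ) ^ c)⁻¹) * p = p - ((n : ℝ) ^ c)⁻¹ * p := by ring
  rw [hfin]
  linarith [hGood', hyp]
end

section
/- Let L = (L_0, …, L_{m−1}) be a list of lists over a linearly ordered type α that is lexicographically sorted, i.e. L_i ≤lex L_j for all i ≤ j. Then for all 0 ≤ i < j ≤ m−1, lcp(L_i, L_j) = min_{i < k ≤ j} lcp(L_{k−1}, L_k). -/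
/-!
For lexicographically sorted `a ≤ b ≤ c` one has `lcp a c = min (lcp a b) (lcp b c)`: the
inequality `≥` holds for any three lists, and if `a` and `b` first differ at a position `p` before
`b` and `c` do, then `a_p < b_p = c_p`, so `a` and `c` differ there too (symmetrically on the other
side). Splitting `[i, j]` at `j - 1` and inducting on `j` gives the formula.
-/

/-- The length of the longest common prefix of two lists: the largest
`k ≤ min |a| |b|` such that `a.take k = b.take k`. -/
def lcp {α : Type*} [DecidableEq α] : List α → List α → ℕ
  | x :: xs, y :: ys => if x = y then lcp xs ys + 1 else 0
  | _, _ => 0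

/-- Lexicographic (non-strict) order on lists. -/
def lexLe {α : Type*} [LinearOrder α] (a b : List α) : Prop :=
  List.Lex (· < ·) a b ∨ a = b

@[simp]
lemma lcp_nil_left {α : Type*} [DecidableEq α] (l : List α) : lcp [] l = 0 := by
  cases l <;> rfl

section LexLe

variable {α : Type*} [LinearOrder α]

lemma lexLe_nil_right_iff {a : List α} : lexLe a [] ↔ a = [] := by
  simp [lexLe, List.not_lex_nil]

lemma cons_lexLe_cons_iff {x y : α} {xs ys : List α} :
    lexLe (x :: xs) (y :: ys) ↔ x < y ∨ x = y ∧ lexLe xs ys := by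
  simp only [lexLe, List.cons_lex_cons_iff, List.cons.injEq]
  tauto

lemma lcp_eq_min_of_lexLe {a b c : List α} (hab : lexLe a b) (hbc : lexLe b c) :
    lcp a c = min (lcp a b) (lcp b c) := by
  induction a generalizing b c with
  | nil => simp
  | cons x xs ih =>
    obtain _ | ⟨y, ys⟩ := b
    · simp [lexLe_nil_right_iff] at hab
    obtain _ | ⟨z, zs⟩ := c
    · simp [lexLe_nil_right_iff] at hbc
    rw [cons_lexLe_cons_iff] at hab hbc
    rcases hab with hxy | ⟨rfl, hab⟩ <;> rcases hbc with hyz | ⟨rfl, hbc⟩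
    · simp [lcp, hxy.ne, (hxy.trans hyz).ne]
    · simp [lcp, hxy.ne]
    · simp [lcp, hyz.ne]
    · simp [lcp, ih hab hbc]

end LexLe

open Finset Order in
lemma eq_inf'_Ioc_pred_of_eq_inf {ι β : Type*} [LinearOrder ι] [LocallyFiniteOrder ι]
    [PredOrder ι] [WellFoundedLT ι] [SemilatticeInf β] {d : ι → ι → β}
    (hd : ∀ a b c, a ≤ b → b ≤ c → d a c = d a b ⊓ d b c) {i j : ι} (hij : i < j) :
    d i j = (Ioc i j).inf' (nonempty_Ioc.2 hij) fun k => d (pred k) k := by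
  induction j using WellFoundedLT.induction with
  | _ j ih =>
    rcases (le_pred_of_lt hij).eq_or_lt with rfl | hlt
    · simp [← insert_Ioc_pred_right_eq_Ioc hij]
    calc d i j = d i (pred j) ⊓ d (pred j) j := hd _ _ _ hlt.le (pred_le j)
      _ = (insert j (Ioc i (pred j))).inf' (insert_nonempty _ _) fun k => d (pred k) k := by
        rw [ih _ (pred_lt_of_not_isMin (not_isMin_of_lt hij)) hlt, inf'_insert, inf_comm]
      _ = _ := inf'_congr _ (insert_Ioc_pred_right_eq_Ioc hij) fun _ _ => rfl

lemma Fin.val_orderPred {m : ℕ} (k : Fin m) : (Order.pred k).val = k.val - 1 := by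
  cases m with
  | zero => exact k.elim0
  | succ n => cases k using Fin.cases <;> simp [Fin.orderPred_apply]

theorem stmt_8 {α : Type*} [LinearOrder α] (m : ℕ) (L : Fin m → List α)
    (hsorted : ∀ i j : Fin m, i ≤ j → lexLe (L i) (L j)) :
    ∀ i j : Fin m, ∀ hij : i < j,
      lcp (L i) (L j) =
        (Finset.Ioc i j).inf' (Finset.nonempty_Ioc.mpr hij)
          (fun k => lcp (L ⟨k.1 - 1, by have := k.isLt; omega⟩) (L k)) := by
  intro i j hij
  have hpred (k : Fin m) : Order.pred k = ⟨k.1 - 1, by omega⟩ := Fin.ext k.val_orderPred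
  simp_rw [← hpred]
  exact eq_inf'_Ioc_pred_of_eq_inf (d := fun a b => lcp (L a) (L b))
    (fun _ _ _ hab hbc => lcp_eq_min_of_lexLe (hsorted _ _ hab) (hsorted _ _ hbc)) hij
end

section
/- Let ℓ ∈ ℕ and let L = (L_0, …, L_{m−1}) be an ℓ-prefix-sorted list of pairwise-distinct lists over a linearly ordered type α such that L_i.take ℓ ≠ L_{i+1}.take ℓ for every 0 ≤ i < m−1. Then L is strictly lexicographically sorted: L_i <lex L_j for all i < j. -/
/-- A finite sequence of lists is `ℓ`-prefix-sorted if its entries are sorted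
lexicographically up to their length-`ℓ` prefixes. -/
def PrefixSorted {α : Type*} [LinearOrder α] (ℓ m : ℕ) (L : Fin m → List α) : Prop :=
  ∀ i j : Fin m, i ≤ j → lexLe ((L i).take ℓ) ((L j).take ℓ)

lemma lex_of_take {α : Type*} [LinearOrder α] :
    ∀ (ℓ : ℕ) (a b : List α), List.Lex (· < ·) (a.take ℓ) (b.take ℓ) →
      List.Lex (· < ·) a b
  | 0, _, _, h => by simp at h
  | (ℓ+1), [], [], h => by simp at h
  | (ℓ+1), [], (y :: b), _ => List.Lex.nil
  | (ℓ+1), (x :: a), [], h => by simp at h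
  | (ℓ+1), (x :: a), (y :: b), h => by
      simp only [List.take_succ_cons] at h
      cases h with
      | rel h => exact List.Lex.rel h
      | cons h => exact List.Lex.cons (lex_of_take ℓ a b h)

theorem stmt_13 {α : Type*} [LinearOrder α] (ℓ m : ℕ) (L : Fin m → List α)
    (hsorted : PrefixSorted ℓ m L)
    (hdist : ∀ i j : Fin m, i ≠ j → L i ≠ L j)
    (hadj : ∀ i j : Fin m, i.1 + 1 = j.1 → (L i).take ℓ ≠ (L j).take ℓ) :
    ∀ i j : Fin m, i < j → List.Lex (· < ·) (L i) (L j) := by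
  intro i j hij
  have hlt : List.Lex (· < ·) ((L i).take ℓ) ((L j).take ℓ) := by
    rcases hsorted i j (le_of_lt hij) with h | h
    · exact h
    · -- prefixes equal: derive contradiction via adjacent pair
      exfalso
      have hi1 : i.1 + 1 < m := lt_of_le_of_lt (Nat.succ_le_of_lt hij) j.2
      set k : Fin m := ⟨i.1 + 1, hi1⟩ with hk
      have h1 := hsorted i k (Fin.le_of_lt (by exact Fin.mk_lt_of_lt_val (by simp [hk])))
      have h2 := hsorted k j (by
        change i.1 + 1 ≤ j.1
        exact Nat.succ_le_of_lt hij)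
      have hne := hadj i k rfl
      rcases h1 with h1 | h1
      · rcases h2 with h2 | h2
        · rw [h] at h1
          exact asymm h1 h2
        · exact hne (by rw [h2, h])
      · exact hne h1
  exact lex_of_take ℓ _ _ hlt
end

section
/- Let ℓ ∈ ℕ and let L = (L_0, …, L_{m−1}) be an ℓ-prefix-sorted list of pairwise-distinct lists over a linearly ordered type α. Let S = { i : (i > 0 and L_{i−1}.take ℓ = L_i.take ℓ) or (i < m−1 and L_i.take ℓ = L_{i+1}.take ℓ) }. Let L' = (L'_0, …, L'_{m−1}) be a list of the same length such that L'_i = L_i for all i ∉ S, and such that the subsequence of L' at the positions of S, taken in increasing order of position, is a strictly lexicographically sorted permutation of the subsequence of L at the positions of S. Then L' is strictly lexicographically sorted: L'_i <lex L'_j for all i < j. -/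
/-- `i` belongs to the set `S` of positions that share their length-`ℓ` prefix
with the previous or the next position. -/
def InS {α : Type*} [LinearOrder α] (ℓ m : ℕ) (L : Fin m → List α) (i : Fin m) : Prop :=
  (∃ j : Fin m, j.1 + 1 = i.1 ∧ (L j).take ℓ = (L i).take ℓ) ∨
  (∃ j : Fin m, i.1 + 1 = j.1 ∧ (L i).take ℓ = (L j).take ℓ)

namespace List

variable {α : Type*} [LinearOrder α]

theorem take_le_take_of_lt (n : ℕ) {a b : List α} (h : a < b) : a.take n ≤ b.take n := by
  induction h generalizing n with
  | nil => cases n <;> simp [le_iff_lt_or_eq]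
  | cons _ ih =>
    cases n with
    | zero => simp
    | succ n => exact cons_le_cons _ (ih n)
  | rel h =>
    cases n with
    | zero => simp
    | succ n => exact (Lex.rel h : _ < _).le

theorem take_mono (n : ℕ) : Monotone (take n : List α → List α) := fun _ _ hab =>
  hab.lt_or_eq.elim (take_le_take_of_lt n) fun h => h ▸ le_rfl

theorem lt_of_take_lt_take {n : ℕ} {a b : List α} (h : a.take n < b.take n) : a < b :=
  lt_of_not_ge fun hba => (take_mono n hba).not_gt h

end List

theorem lexLe_iff_le {α : Type*} [LinearOrder α] {a b : List α} : lexLe a b ↔ a ≤ b := by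
  rw [lexLe, le_iff_lt_or_eq]; rfl

theorem PrefixSorted.monotone {α : Type*} [LinearOrder α] {ℓ m : ℕ} {L : Fin m → List α}
    (h : PrefixSorted ℓ m L) : Monotone fun i => (L i).take ℓ :=
  fun i j hij => lexLe_iff_le.1 (h i j hij)

namespace Equiv.Perm

variable {ι : Type*} [LinearOrder ι] [Finite ι] {σ : Perm ι} {S : Set ι} {i : ι}

theorem exists_mem_le_le_apply (hS : Set.MapsTo σ S S) (hi : i ∈ S) :
    ∃ t ∈ S, t ≤ i ∧ i ≤ σ t := by
  by_contra! h
  have hmaps : Set.MapsTo σ (S ∩ Set.Iic i) (S ∩ Set.Iio i) :=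
    fun t ⟨htS, hti⟩ => ⟨hS htS, h t htS hti⟩
  have hssub : S ∩ Set.Iio i ⊂ S ∩ Set.Iic i :=
    Set.ssubset_iff_subset_ne.2 ⟨Set.inter_subset_inter_right _ Set.Iio_subset_Iic_self,
      fun heq => lt_irrefl i (heq ▸ ⟨hi, le_rfl⟩ : i ∈ S ∩ Set.Iio i).2⟩
  exact (Set.ncard_le_ncard_of_injOn σ hmaps σ.injective.injOn).not_gt
    (Set.ncard_lt_ncard hssub)

theorem exists_mem_le_apply_le (hS : Set.MapsTo σ S S) (hi : i ∈ S) :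
    ∃ t ∈ S, i ≤ t ∧ σ t ≤ i :=
  (exists_mem_le_le_apply (ι := ιᵒᵈ) hS hi).imp fun _ ⟨htS, hti, hit⟩ => ⟨htS, hti, hit⟩

theorem apply_eq_of_monotoneOn {β : Type*} [PartialOrder β] {f : ι → β}
    (hS : Set.MapsTo σ S S) (hf : MonotoneOn f S) (hfσ : MonotoneOn (f ∘ σ) S) (hi : i ∈ S) :
    f (σ i) = f i := by
  obtain ⟨t, htS, hti, hiσt⟩ := exists_mem_le_le_apply hS hi
  obtain ⟨u, huS, hiu, hσui⟩ := exists_mem_le_apply_le hS hi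
  apply le_antisymm
  · calc f (σ i) ≤ f (σ u) := hfσ hi huS hiu
      _ ≤ f i := hf (hS huS) hi hσui
  · calc f i ≤ f (σ t) := hf hi (hS htS) hiσt
      _ ≤ f (σ i) := hfσ htS hi hti

end Equiv.Perm

theorem inS_of_take_eq {α : Type*} [LinearOrder α] {ℓ m : ℕ} {L : Fin m → List α}
    (hsorted : PrefixSorted ℓ m L) {i j : Fin m} (hij : i < j)
    (h : (L i).take ℓ = (L j).take ℓ) : InS ℓ m L i ∧ InS ℓ m L j := by
  have hconst : ∀ k, i ≤ k → k ≤ j → (L k).take ℓ = (L i).take ℓ := fun k hik hkj =>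
    le_antisymm (h ▸ hsorted.monotone hkj) (hsorted.monotone hik)
  refine ⟨.inr ⟨⟨i + 1, by omega⟩, rfl, (hconst _ ?_ ?_).symm⟩,
    .inl ⟨⟨j - 1, by omega⟩, by simp; omega, (hconst _ ?_ ?_).trans h⟩⟩ <;>
    simp [Fin.le_def] <;> omega

theorem stmt_14_general {α : Type*} [LinearOrder α] (ℓ m : ℕ) (L L' : Fin m → List α)
    (hsorted : PrefixSorted ℓ m L)
    (hperm : ∃ σ : Equiv.Perm (Fin m),
      (∀ i : Fin m, ¬ InS ℓ m L i → σ i = i) ∧ ∀ i : Fin m, L' i = L (σ i))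
    (hsortS : ∀ i j : Fin m, InS ℓ m L i → InS ℓ m L j → i < j →
      List.Lex (· < ·) (L' i) (L' j)) :
    ∀ i j : Fin m, i < j → List.Lex (· < ·) (L' i) (L' j) := by
  obtain ⟨σ, hσfix, hσL⟩ := hperm
  set f : Fin m → List α := fun i => (L i).take ℓ
  have hf : Monotone f := hsorted.monotone
  have hσS : Set.MapsTo σ {i | InS ℓ m L i} {i | InS ℓ m L i} := fun i hi => by
    by_contra h
    exact h (by rwa [σ.injective (hσfix _ h)])
  have hfσ : MonotoneOn (f ∘ σ) {i | InS ℓ m L i} := fun i hi j hj hij => by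
    obtain hij | rfl := hij.lt_or_eq
    · simpa only [Function.comp, hσL] using List.take_mono ℓ (le_of_lt (hsortS i j hi hj hij))
    · rfl
  have htake : ∀ i, (L' i).take ℓ = f i := fun i => by
    rw [hσL]
    by_cases hi : InS ℓ m L i
    · exact σ.apply_eq_of_monotoneOn hσS (hf.monotoneOn _) hfσ hi
    · rw [hσfix i hi]
  intro i j hij
  by_cases hS : InS ℓ m L i ∧ InS ℓ m L j
  · exact hsortS i j hS.1 hS.2 hij
  · refine List.lt_of_take_lt_take (n := ℓ) ?_
    rw [htake, htake]
    exact (hf hij.le).lt_of_ne fun h => hS (inS_of_take_eq hsorted hij h)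

theorem stmt_14 {α : Type*} [LinearOrder α] (ℓ m : ℕ) (L L' : Fin m → List α)
    (hsorted : PrefixSorted ℓ m L)
    (hdist : ∀ i j : Fin m, i ≠ j → L i ≠ L j)
    (hperm : ∃ σ : Equiv.Perm (Fin m),
      (∀ i : Fin m, ¬ InS ℓ m L i → σ i = i) ∧ ∀ i : Fin m, L' i = L (σ i))
    (hfix : ∀ i : Fin m, ¬ InS ℓ m L i → L' i = L i)
    (hsortS : ∀ i j : Fin m, InS ℓ m L i → InS ℓ m L j → i < j →
      List.Lex (· < ·) (L' i) (L' j)) :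
    ∀ i j : Fin m, i < j → List.Lex (· < ·) (L' i) (L' j) :=
  stmt_14_general ℓ m L L' hsorted hperm hsortS
end
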